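/- (Corollaries 6.10 and 6.12: basis-independence of the trace class.) Let U : H →L[K] H be unitary (surjective, isometric, inner-product-preserving), so that {U (e n)}ₙ is an orthonormal basis of H, and let T : H →L[K] H be of trace class. Then the matrix of T with respect to the new basis also vanishes along the cofinite filter: Tendsto (fun q : ℕ × ℕ => ⟪U (e q.1), T (U (e q.2))⟫) Filter.cofinite (nhds 0). -/

import Mathlib

open Filter

noncomputable section

variable (K : Type*) [NontriviallyNormedField K] [IsUltrametricDist K]
  [CompleteSpace K] [StarRing K] [NormedStarGroup K]

/-- The p-adic coordinate Hilbert space: zero-convergent sequences in `K` with sup norm. -/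
abbrev H := ZeroAtInftyContinuousMap ℕ K

/-- The standard basis vectors of `H K`. -/
def e (n : ℕ) : H K where
  toFun := fun m => if m = n then 1 else 0
  continuous_toFun := continuous_of_discreteTopology
  zero_at_infty' := by
    rw [cocompact_eq_atTop]
    refine Filter.Tendsto.congr' ?_ tendsto_const_nhds
    filter_upwards [Filter.eventually_gt_atTop n] with m hm
    simp [Nat.ne_of_gt hm]

/-- The canonical inner product on `H K`: `⟪x, y⟫ = ∑' i, star (x i) * y i`. -/
def inner' (x y : H K) : K := ∑' i, star (x i) * y i

/-- A bounded operator is of trace class if its matrix entries vanish along the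
cofinite filter of `ℕ × ℕ`. -/
def IsTraceClass (T : H K →L[K] H K) : Prop :=
  Tendsto (fun q : ℕ × ℕ => (T (e K q.2)) q.1) Filter.cofinite (nhds 0)

open Topology
open scoped BoundedContinuousFunction ZeroAtInfty

/-! In the basis `U (e i)`, the matrix of `T` is `∑ₖ ∑ₗ conj(U_{ki}) U_{lj} T_{kl}`, and by the
ultrametric inequality its norm is at most `sup_{k,l} |U_{ki}| |U_{lj}| |T_{kl}|`. Outside a finite
set `S` of positions the entries `T_{kl}` are small. Unitarity makes every row of the matrix of
`U` a null sequence (`U_{ki} = conj (x i)` where `U x = e k`), so for all but finitely many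
pairs `(i, j)`, either `U_{ki}` is small for the finitely many rows `k` met by `S`, or `U_{lj}` is
small for the finitely many columns `l` met by `S`. -/

theorem eventually_cofinite_forall_mul_mul_le {ι ι' κ κ' : Type*} {a : ι → κ → ℝ}
    {b : ι' → κ' → ℝ} {t : κ × κ' → ℝ} {M ε : ℝ} (hM : 0 ≤ M) (hε : 0 < ε)
    (ha : ∀ i k, 0 ≤ a i k ∧ a i k ≤ M) (hb : ∀ j l, 0 ≤ b j l ∧ b j l ≤ M)
    (ht : ∀ p, 0 ≤ t p ∧ t p ≤ M)
    (ha_lim : ∀ k, Tendsto (a · k) cofinite (𝓝 0)) (hb_lim : ∀ l, Tendsto (b · l) cofinite (𝓝 0))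
    (ht_lim : Tendsto t cofinite (𝓝 0)) :
    ∀ᶠ q : ι × ι' in cofinite, ∀ k l, a q.1 k * b q.2 l * t (k, l) ≤ ε := by
  set δ := ε / (M ^ 2 + 1)
  have hδ : 0 < δ := by positivity
  have hδM : δ * M * M ≤ ε := by
    rw [div_mul_eq_mul_div, div_mul_eq_mul_div, div_le_iff₀ (by positivity)]
    nlinarith
  set S := {p | ¬ t p ≤ δ}
  have hS : S.Finite := eventually_cofinite.1 (ht_lim.eventually (eventually_le_nhds hδ))
  have hrows : ∀ᶠ i in cofinite, ∀ p ∈ S, a i p.1 ≤ δ :=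
    (eventually_all_finite hS).2 fun p _ => (ha_lim p.1).eventually (eventually_le_nhds hδ)
  have hcols : ∀ᶠ j in cofinite, ∀ p ∈ S, b j p.2 ≤ δ :=
    (eventually_all_finite hS).2 fun p _ => (hb_lim p.2).eventually (eventually_le_nhds hδ)
  have hsmall : ∀ i j k l, a i k ≤ δ ∨ b j l ≤ δ ∨ t (k, l) ≤ δ →
      a i k * b j l * t (k, l) ≤ ε := by
    intro i j k l h
    obtain ⟨ha0, haM⟩ := ha i k
    obtain ⟨hb0, hbM⟩ := hb j l
    obtain ⟨ht0, htM⟩ := ht (k, l)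
    rcases h with h | h | h
    · calc a i k * b j l * t (k, l) ≤ δ * M * M := by gcongr
        _ ≤ ε := hδM
    · calc a i k * b j l * t (k, l) ≤ M * δ * M := by gcongr
        _ ≤ ε := by linarith
    · calc a i k * b j l * t (k, l) ≤ M * M * δ := by gcongr
        _ ≤ ε := by linarith
  rw [← coprod_cofinite]
  refine mem_coprod_iff.2 ⟨⟨_, hrows, fun q hq k l => hsmall _ _ _ _ ?_⟩,
    ⟨_, hcols, fun q hq k l => hsmall _ _ _ _ ?_⟩⟩
  all_goals by_cases hkl : (k, l) ∈ S
  exacts [Or.inl (hq _ hkl), Or.inr (Or.inr (not_not.1 hkl)),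
    Or.inr (Or.inl (hq _ hkl)), Or.inr (Or.inr (not_not.1 hkl))]

instance BoundedContinuousFunction.isUltrametricDist {α β : Type*} [TopologicalSpace α]
    [PseudoMetricSpace β] [IsUltrametricDist β] : IsUltrametricDist (α →ᵇ β) :=
  ⟨fun f g h => (dist_le (by positivity)).2 fun x =>
    (dist_triangle_max _ _ _).trans (max_le_max (dist_coe_le_dist x) (dist_coe_le_dist x))⟩

namespace ZeroAtInftyContinuousMap

variable {α β : Type*} [TopologicalSpace α]

instance isUltrametricDist [PseudoMetricSpace β] [Zero β] [IsUltrametricDist β] :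
    IsUltrametricDist C₀(α, β) :=
  ⟨fun f g h => by simpa only [dist_toBCF_eq_dist] using dist_triangle_max f.toBCF g.toBCF h.toBCF⟩

theorem norm_apply_le [SeminormedAddCommGroup β] (f : C₀(α, β)) (x : α) : ‖f x‖ ≤ ‖f‖ :=
  norm_toBCF_eq_norm (f := f) ▸ f.toBCF.norm_coe_le_norm x

variable (𝕜 : Type*) [NormedField 𝕜] [SeminormedAddCommGroup β] [NormedSpace 𝕜 β]

def evalCLM (x : α) : C₀(α, β) →L[𝕜] β :=
  LinearMap.mkContinuous
    { toFun := fun f => f x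
      map_add' := fun _ _ => rfl
      map_smul' := fun _ _ => rfl }
    1 fun f => by rw [one_mul]; exact f.norm_apply_le x

@[simp]
theorem evalCLM_apply (x : α) (f : C₀(α, β)) : evalCLM 𝕜 x f = f x := rfl

end ZeroAtInftyContinuousMap

section CoordinateSpace

variable {𝕜 : Type*} [NontriviallyNormedField 𝕜]

theorem e_apply (n m : ℕ) : e 𝕜 n m = if m = n then 1 else 0 := rfl

theorem norm_e_le (n : ℕ) : ‖e 𝕜 n‖ ≤ 1 := by
  rw [← ZeroAtInftyContinuousMap.norm_toBCF_eq_norm]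
  refine (BoundedContinuousFunction.norm_le zero_le_one).2 fun m => ?_
  change ‖e 𝕜 n m‖ ≤ 1
  rw [e_apply]
  split_ifs <;> simp

theorem norm_apply_e_apply_le (T : H 𝕜 →L[𝕜] H 𝕜) (l k : ℕ) : ‖T (e 𝕜 l) k‖ ≤ ‖T‖ :=
  calc ‖T (e 𝕜 l) k‖ ≤ ‖T (e 𝕜 l)‖ := (T (e 𝕜 l)).norm_apply_le k
    _ ≤ ‖T‖ * ‖e 𝕜 l‖ := T.le_opNorm _
    _ ≤ ‖T‖ := mul_le_of_le_one_right (norm_nonneg T) (norm_e_le l)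

theorem tendsto_cofinite_apply (x : H 𝕜) : Tendsto x cofinite (𝓝 0) := by
  rw [← cocompact_eq_cofinite]
  exact x.zero_at_infty'

theorem hasSum_apply_smul_e [IsUltrametricDist 𝕜] [CompleteSpace 𝕜] (x : H 𝕜) :
    HasSum (fun l => x l • e 𝕜 l) x := by
  have hsummable : Summable (fun l => x l • e 𝕜 l) := by
    refine NonarchimedeanAddGroup.summable_of_tendsto_cofinite_zero <|
      squeeze_zero_norm (fun l => ?_) (by simpa using (tendsto_cofinite_apply x).norm)
    exact (norm_smul_le (x l) (e 𝕜 l)).trans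
      (mul_le_of_le_one_right (norm_nonneg _) (norm_e_le l))
  obtain ⟨y, hy⟩ := hsummable
  convert hy
  ext k
  have hk := (hy.mapL (ZeroAtInftyContinuousMap.evalCLM 𝕜 k)).tsum_eq
  rw [tsum_eq_single k fun l hl => by simp [e_apply, Ne.symm hl]] at hk
  simpa [e_apply] using hk

theorem apply_eq_tsum [IsUltrametricDist 𝕜] [CompleteSpace 𝕜] (T : H 𝕜 →L[𝕜] H 𝕜) (x : H 𝕜)
    (k : ℕ) :
    T x k = ∑' l, x l * T (e 𝕜 l) k := by
  simpa using (((hasSum_apply_smul_e x).mapL T).mapL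
    (ZeroAtInftyContinuousMap.evalCLM 𝕜 k)).tsum_eq.symm

theorem inner'_e_left [StarRing 𝕜] (k : ℕ) (y : H 𝕜) : inner' 𝕜 (e 𝕜 k) y = y k := by
  rw [inner', tsum_eq_single k fun m hm => by simp [e_apply, hm]]
  simp [e_apply]

theorem inner'_e_right [StarRing 𝕜] (x : H 𝕜) (i : ℕ) : inner' 𝕜 x (e 𝕜 i) = star (x i) := by
  rw [inner', tsum_eq_single i fun m hm => by simp [e_apply, hm]]
  simp [e_apply]

theorem norm_inner'_apply_le [IsUltrametricDist 𝕜] [CompleteSpace 𝕜] [StarRing 𝕜]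
    [NormedStarGroup 𝕜] (T : H 𝕜 →L[𝕜] H 𝕜) (x y : H 𝕜) {ε : ℝ} (hε : 0 ≤ ε)
    (h : ∀ k l, ‖x k‖ * ‖y l‖ * ‖T (e 𝕜 l) k‖ ≤ ε) : ‖inner' 𝕜 x (T y)‖ ≤ ε := by
  refine IsUltrametricDist.norm_tsum_le_of_forall_le_of_nonneg hε fun k => ?_
  rw [apply_eq_tsum T y k, ← tsum_mul_left]
  refine IsUltrametricDist.norm_tsum_le_of_forall_le_of_nonneg hε fun l => ?_
  calc ‖star (x k) * (y l * T (e 𝕜 l) k)‖ = ‖x k‖ * ‖y l‖ * ‖T (e 𝕜 l) k‖ := by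
        rw [norm_mul, norm_mul, norm_star, mul_assoc]
    _ ≤ ε := h k l

theorem tendsto_cofinite_apply_e_of_surjective_of_inner' [StarRing 𝕜] [NormedStarGroup 𝕜]
    (U : H 𝕜 →L[𝕜] H 𝕜)
    (hUsurj : Function.Surjective U) (hUip : ∀ x y : H 𝕜, inner' 𝕜 (U x) (U y) = inner' 𝕜 x y)
    (k : ℕ) : Tendsto (fun i => U (e 𝕜 i) k) cofinite (𝓝 0) := by
  obtain ⟨x, hx⟩ := hUsurj (e 𝕜 k)
  have hrow : ∀ i, U (e 𝕜 i) k = star (x i) := fun i => by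
    rw [← inner'_e_left k (U (e 𝕜 i)), ← hx, hUip, inner'_e_right]
  simpa [hrow] using (tendsto_cofinite_apply x).star

end CoordinateSpace

theorem stmt10 (U T : H K →L[K] H K)
    (hUsurj : Function.Surjective U)
    (hUip : ∀ x y : H K, inner' K (U x) (U y) = inner' K x y)
    (hT : IsTraceClass K T) :
    Tendsto (fun q : ℕ × ℕ => inner' K (U (e K q.1)) (T (U (e K q.2))))
      Filter.cofinite (nhds 0) := by
  have hU := tendsto_cofinite_apply_e_of_surjective_of_inner' U hUsurj hUip
  refine Metric.nhds_basis_closedBall.tendsto_right_iff.2 fun ε hε => ?_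
  filter_upwards [eventually_cofinite_forall_mul_mul_le (a := fun i k => ‖U (e K i) k‖)
    (b := fun j l => ‖U (e K j) l‖) (t := fun p => ‖T (e K p.2) p.1‖) (M := max ‖U‖ ‖T‖)
    (by positivity) hε
    (fun i k => ⟨norm_nonneg _, (norm_apply_e_apply_le U i k).trans (le_max_left _ _)⟩)
    (fun j l => ⟨norm_nonneg _, (norm_apply_e_apply_le U j l).trans (le_max_left _ _)⟩)
    (fun p => ⟨norm_nonneg _, (norm_apply_e_apply_le T p.2 p.1).trans (le_max_right _ _)⟩)
    (fun k => by simpa using (hU k).norm) (fun l => by simpa using (hU l).norm)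
    (by simpa using hT.norm)] with q hq
  exact mem_closedBall_zero_iff.2 (norm_inner'_apply_le T _ _ hε.le hq)
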